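/- In the example of morphisms 2𝒪(−2) → 𝒪(−1) ⊕ 𝒪 on ℙ₂ with polarization μ₁ < 1/2: an element x = [[z₁, z₂],[q₁, q₂]] is G-stable if and only if (z₁, z₂) ≠ (0, 0) and for every z ∈ V*, the quadratic forms q₁ − z z₁ and q₂ − z z₂ are linearly independent. -/

import Mathlib

open MvPolynomial Module

/-- King stability, with respect to the polarization `(1/2, −μ₁, −μ₂)`, of the morphism
`2𝒪(−2) → 𝒪(−1) ⊕ 𝒪` on `ℙ₂ = ℙ(V)` (`dim V = 3`) given by the matrix
`[[z₁, z₂], [q₁, q₂]]`. -/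
def GredStable (μ₁ μ₂ : ℚ) (z₁ z₂ q₁ q₂ : MvPolynomial (Fin 3) ℂ) : Prop :=
  ∀ (M' : Submodule ℂ (Fin 2 → ℂ)) (N'₁ N'₂ : Submodule ℂ ℂ),
    (N'₁ = ⊥ → ∀ v ∈ M', v 0 • z₁ + v 1 • z₂ = 0) →
    (N'₂ = ⊥ → ∀ v ∈ M', v 0 • q₁ + v 1 • q₂ = 0) →
    ¬(M' = ⊥ ∧ N'₁ = ⊥ ∧ N'₂ = ⊥) →
    ¬(M' = ⊤ ∧ N'₁ = ⊤ ∧ N'₂ = ⊤) →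
    (1 / 2 : ℚ) * (finrank ℂ M' : ℚ) <
      μ₁ * (finrank ℂ N'₁ : ℚ) + μ₂ * (finrank ℂ N'₂ : ℚ)

/-!
As `dim N'ᵢ ∈ {0, 1}`, King's inequality splits into four cases. For `N' = (0, ℂ)` the
subspace `M'` lies in the kernel of `(z₁, z₂)`, and `dim M' / 2 < μ₂` (where `μ₂ > 1/2`) fails
only for `M' = ℂ²`, i.e. only when `z₁ = z₂ = 0`. For `N' = (ℂ, 0)` the subspace `M'` lies in the
kernel of `(q₁, q₂)`, and `dim M' / 2 < μ₁` (where `0 < μ₁ < 1/2`) holds only for `M' = 0`; so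
this case holds for all `M'` iff `q₁, q₂` are independent. The other two cases always hold.
Replacing `z` by `-z` matches the `H`-orbit with the condition of the theorem.
-/

theorem eq_zero_and_eq_zero_of_forall_smul_add_eq_zero {R M : Type*} [Semiring R]
    [AddCommMonoid M] [Module R M] {x y : M} (h : ∀ v : Fin 2 → R, v 0 • x + v 1 • y = 0) :
    x = 0 ∧ y = 0 :=
  ⟨by simpa using h ![1, 0], by simpa using h ![0, 1]⟩

theorem Submodule.eq_bot_of_forall_smul_add_eq_zero {R M : Type*} [Ring R] [AddCommGroup M]
    [Module R M] {x y : M} (hxy : LinearIndependent R ![x, y])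
    {p : Submodule R (Fin 2 → R)} (hp : ∀ v ∈ p, v 0 • x + v 1 • y = 0) : p = ⊥ := by
  refine (Submodule.eq_bot_iff p).mpr fun v hv => ?_
  obtain ⟨h0, h1⟩ := LinearIndependent.pair_iff.mp hxy (v 0) (v 1) (hp v hv)
  ext i
  fin_cases i <;> simpa

theorem Submodule.finrank_le_one_of_ne_top {K : Type*} [DivisionRing K]
    {p : Submodule K (Fin 2 → K)} (hp : p ≠ ⊤) : finrank K p ≤ 1 := by
  have := Submodule.finrank_lt hp
  rw [finrank_fin_fun] at this
  omega

namespace GredStable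

variable {μ₁ μ₂ : ℚ} {z₁ z₂ Q₁ Q₂ : MvPolynomial (Fin 3) ℂ}

theorem not_both_zero (hμsum : μ₁ + μ₂ = 1) (hμ₁pos : 0 < μ₁)
    (h : GredStable μ₁ μ₂ z₁ z₂ Q₁ Q₂) : ¬(z₁ = 0 ∧ z₂ = 0) := by
  rintro ⟨rfl, rfl⟩
  have key := h ⊤ ⊥ ⊤ (fun _ _ _ => by simp) (fun hc => absurd hc top_ne_bot)
    (fun hc => top_ne_bot hc.1) (fun hc => bot_ne_top hc.2.1)
  simp only [finrank_top, finrank_bot, finrank_fin_fun, finrank_self] at key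
  push_cast at key
  linarith

theorem linearIndependent (hμ₁ : μ₁ < 1 / 2) (h : GredStable μ₁ μ₂ z₁ z₂ Q₁ Q₂) :
    LinearIndependent ℂ ![Q₁, Q₂] := by
  refine LinearIndependent.pair_iff.mpr fun s t hst => ?_
  by_contra hne
  have hv : (![s, t] : Fin 2 → ℂ) ≠ 0 := fun h0 =>
    hne ⟨by simpa using congrFun h0 0, by simpa using congrFun h0 1⟩
  have hkernel : ∀ v ∈ Submodule.span ℂ {![s, t]}, v 0 • Q₁ + v 1 • Q₂ = 0 := by
    intro v hv
    obtain ⟨c, rfl⟩ := Submodule.mem_span_singleton.mp hv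
    simp [mul_smul, ← smul_add, hst]
  have key := h (Submodule.span ℂ {![s, t]}) ⊤ ⊥ (fun hc => absurd hc top_ne_bot)
    (fun _ => hkernel) (fun hc => hv (Submodule.span_singleton_eq_bot.mp hc.1))
    (fun hc => bot_ne_top hc.2.2)
  simp only [finrank_span_singleton hv, finrank_top, finrank_bot, finrank_self] at key
  push_cast at key
  linarith

end GredStable

theorem gredStable_of_linearIndependent {μ₁ μ₂ : ℚ} (hμsum : μ₁ + μ₂ = 1) (hμ₁pos : 0 < μ₁)
    (hμ₁ : μ₁ < 1 / 2) {z₁ z₂ Q₁ Q₂ : MvPolynomial (Fin 3) ℂ} (hz : ¬(z₁ = 0 ∧ z₂ = 0))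
    (hQ : LinearIndependent ℂ ![Q₁, Q₂]) : GredStable μ₁ μ₂ z₁ z₂ Q₁ Q₂ := by
  intro M' N'₁ N'₂ hzker hQker hbot htop
  have hM'_bot : N'₂ = ⊥ → M' = ⊥ := fun hN =>
    Submodule.eq_bot_of_forall_smul_add_eq_zero hQ (hQker hN)
  rcases eq_bot_or_eq_top N'₁ with hN₁ | hN₁ <;> rcases eq_bot_or_eq_top N'₂ with hN₂ | hN₂
  · exact absurd ⟨hM'_bot hN₂, hN₁, hN₂⟩ hbot
  · have hM' : M' ≠ ⊤ := by
      rintro rfl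
      exact hz (eq_zero_and_eq_zero_of_forall_smul_add_eq_zero fun v => hzker hN₁ v trivial)
    have hdim : (finrank ℂ M' : ℚ) ≤ 1 := by exact_mod_cast M'.finrank_le_one_of_ne_top hM'
    subst hN₁ hN₂
    simp only [finrank_bot, finrank_top, finrank_self]
    push_cast
    linarith
  · rw [hM'_bot hN₂]
    subst hN₁ hN₂
    simp only [finrank_bot, finrank_top, finrank_self]
    push_cast
    linarith
  · have hdim : (finrank ℂ M' : ℚ) ≤ 1 := by
      exact_mod_cast M'.finrank_le_one_of_ne_top fun hM' => htop ⟨hM', hN₁, hN₂⟩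
    subst hN₁ hN₂
    simp only [finrank_top, finrank_self]
    push_cast
    linarith

theorem gredStable_iff {μ₁ μ₂ : ℚ} (hμsum : μ₁ + μ₂ = 1) (hμ₁pos : 0 < μ₁) (hμ₁ : μ₁ < 1 / 2)
    {z₁ z₂ Q₁ Q₂ : MvPolynomial (Fin 3) ℂ} :
    GredStable μ₁ μ₂ z₁ z₂ Q₁ Q₂ ↔ ¬(z₁ = 0 ∧ z₂ = 0) ∧ LinearIndependent ℂ ![Q₁, Q₂] :=
  ⟨fun h => ⟨h.not_both_zero hμsum hμ₁pos, h.linearIndependent hμ₁⟩,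
    fun h => gredStable_of_linearIndependent hμsum hμ₁pos hμ₁ h.1 h.2⟩

theorem stmt18_general (μ₁ μ₂ : ℚ) (hμsum : μ₁ + μ₂ = 1) (hμ₁pos : 0 < μ₁) (hμ₁ : μ₁ < 1 / 2)
    (z₁ z₂ q₁ q₂ : MvPolynomial (Fin 3) ℂ) :
    (∀ z : MvPolynomial (Fin 3) ℂ, z.IsHomogeneous 1 →
        GredStable μ₁ μ₂ z₁ z₂ (q₁ + z * z₁) (q₂ + z * z₂)) ↔
      (¬(z₁ = 0 ∧ z₂ = 0) ∧
        ∀ z : MvPolynomial (Fin 3) ℂ, z.IsHomogeneous 1 →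
          LinearIndependent ℂ ![q₁ - z * z₁, q₂ - z * z₂]) := by
  simp only [gredStable_iff hμsum hμ₁pos hμ₁]
  constructor
  · intro H
    refine ⟨(H 0 (isHomogeneous_zero _ _ _)).1, fun z hz => ?_⟩
    simpa [sub_eq_add_neg] using (H (-z) hz.neg).2
  · rintro ⟨hz, hQ⟩ z hzh
    exact ⟨hz, by simpa [sub_eq_add_neg] using hQ (-z) hzh.neg⟩

/-- For morphisms `2𝒪(−2) → 𝒪(−1) ⊕ 𝒪` on `ℙ₂` with polarization `μ₁ < 1/2`:
`x = [[z₁,z₂],[q₁,q₂]]` is `G`-stable (every point of its `H`-orbit is `G_red`-stable)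
iff `(z₁, z₂) ≠ (0,0)` and for every linear form `z`, the quadrics `q₁ − z z₁` and
`q₂ − z z₂` are linearly independent. -/
theorem stmt18 (μ₁ μ₂ : ℚ) (hμsum : μ₁ + μ₂ = 1) (hμ₁pos : 0 < μ₁) (hμ₁ : μ₁ < 1 / 2)
    (z₁ z₂ q₁ q₂ : MvPolynomial (Fin 3) ℂ)
    (hz₁ : z₁.IsHomogeneous 1) (hz₂ : z₂.IsHomogeneous 1)
    (hq₁ : q₁.IsHomogeneous 2) (hq₂ : q₂.IsHomogeneous 2) :
    (∀ z : MvPolynomial (Fin 3) ℂ, z.IsHomogeneous 1 →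
        GredStable μ₁ μ₂ z₁ z₂ (q₁ + z * z₁) (q₂ + z * z₂)) ↔
      (¬(z₁ = 0 ∧ z₂ = 0) ∧
        ∀ z : MvPolynomial (Fin 3) ℂ, z.IsHomogeneous 1 →
          LinearIndependent ℂ ![q₁ - z * z₁, q₂ - z * z₂]) :=
  stmt18_general μ₁ μ₂ hμsum hμ₁pos hμ₁ z₁ z₂ q₁ q₂
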